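/- (Strict minimality of the bound-state energy at zero quasi-momentum, attractive case.) Let d ∈ {1,2}, μ < 0 and k ∈ T^d with k ≠ 0. Suppose z₀ < E_min(0) satisfies Δ_μ(0;z₀) = 0 and z_k < E_min(k) satisfies Δ_μ(k;z_k) = 0. Then z₀ < z_k. -/

import Mathlib

open MeasureTheory Real Filter

noncomputable section

instance fact_two_pi_pos : Fact (0 < 2 * Real.pi) := ⟨by positivity⟩

/-- The `d`-dimensional torus `(ℝ/2πℤ)^d`. -/
abbrev Torus (d : ℕ) : Type := Fin d → AddCircle (2 * Real.pi)

/-- Cosine as a function on the circle `ℝ/2πℤ`. -/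
noncomputable def torusCos : AddCircle (2 * Real.pi) → ℝ := Real.cos_periodic.lift

/-- The one-particle dispersion `ε(p) = 2∑ᵢ (1 − cos pⁱ)` on the torus. -/
noncomputable def eps (d : ℕ) (p : Torus d) : ℝ := 2 * ∑ i, (1 - torusCos (p i))

/-- The normalized Haar measure `η` on the torus `T^d`. -/
noncomputable def η (d : ℕ) : Measure (Torus d) :=
  Measure.pi fun _ => (AddCircle.haarAddCircle : Measure (AddCircle (2 * Real.pi)))

instance (d : ℕ) : IsProbabilityMeasure (η d) := by unfold η; infer_instance

/-- The two-particle fiber dispersion `𝓔ₖ(p) = ε(k−p) + ε(p)`. -/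
noncomputable def calE (d : ℕ) (k p : Torus d) : ℝ := eps d (k - p) + eps d p

/-- `E_min(k) = min_{p ∈ T^d} 𝓔ₖ(p)`. -/
noncomputable def Emin (d : ℕ) (k : Torus d) : ℝ := sInf (Set.range (calE d k))

/-- `E_max(k) = max_{p ∈ T^d} 𝓔ₖ(p)`. -/
noncomputable def Emax (d : ℕ) (k : Torus d) : ℝ := sSup (Set.range (calE d k))

/-- The three-particle dispersion `E(K;p,q) = ε(K−p−q) + ε(p) + ε(q)`. -/
noncomputable def EE (d : ℕ) (K p q : Torus d) : ℝ := eps d (K - p - q) + eps d p + eps d q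

/-- `E_min(K) = min_{p,q ∈ T^d} E(K;p,q)`. -/
noncomputable def E3min (d : ℕ) (K : Torus d) : ℝ :=
  sInf (Set.range fun pq : Torus d × Torus d => EE d K pq.1 pq.2)

/-- `E_max(K) = max_{p,q ∈ T^d} E(K;p,q)`. -/
noncomputable def E3max (d : ℕ) (K : Torus d) : ℝ :=
  sSup (Set.range fun pq : Torus d × Torus d => EE d K pq.1 pq.2)

/-- The two-particle determinant `Δ_μ(k;z) = 1 + μ ∫ (𝓔ₖ(q) − z)⁻¹ dη(q)`. -/
noncomputable def Delta2 (d : ℕ) (μ : ℝ) (k : Torus d) (z : ℝ) : ℝ :=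
  1 + μ * ∫ q, (calE d k q - z)⁻¹ ∂(η d)

/-- The channel determinant `Δ_μ(K,p;z) = 1 + μ ∫ (E(K;p,q) − z)⁻¹ dη(q)`. -/
noncomputable def Delta3 (d : ℕ) (μ : ℝ) (K p : Torus d) (z : ℝ) : ℝ :=
  1 + μ * ∫ q, (EE d K p q - z)⁻¹ ∂(η d)

/-- The point `π ∈ ℝ/2πℤ`. -/
noncomputable def piPt : AddCircle (2 * Real.pi) := ((Real.pi : ℝ) : AddCircle (2 * Real.pi))

/-! Both determinants vanish where `∫ (𝓔ₖ - z)⁻¹ dη = -1/μ`, and `z₀ < E_min(0) ≤ 0`.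
Translating by a half `a` of `k` gives `𝓔ₖ(a + x) = ∑ᵢ 4 (1 - cos aⁱ cos xⁱ)`, so `∫ (𝓔ₖ - z)⁻¹`
is the integral of `(4d - z - ∑ᵢ cᵢ cos xⁱ)⁻¹` with `cᵢ = 4 cos aⁱ`, while `k = 0` gives `cᵢ = 4`.
Averaging over the shift `xʲ ↦ xʲ + π`, which flips the sign of the `j`-th term, turns the
integrand into `(B - u)⁻¹ + (B + u)⁻¹`, which increases with `|u|`. Raising the coefficients to `4`
one at a time therefore increases the integral, strictly in a coordinate where `kʲ ≠ 0`, since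
there `|cos aʲ| < 1`. Hence `∫ (𝓔ₖ - z)⁻¹ < ∫ (𝓔₀ - z)⁻¹` for `z < 0`, and as the right side
increases with `z`, `zₖ ≤ z₀` is impossible. -/

lemma Finset.sum_sub_sum_eq_of_eq_of_ne {ι M : Type*} [Fintype ι] [AddCommGroup M] {f g : ι → M}
    (j : ι) (h : ∀ i ≠ j, f i = g i) : ∑ i, f i - ∑ i, g i = f j - g j := by
  rw [← Finset.sum_sub_distrib]
  exact Finset.sum_eq_single j (fun i _ hi => by rw [h i hi, sub_self]) (by simp)

lemma inv_sub_add_inv_add {B u : ℝ} (hu : |u| < B) :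
    (B - u)⁻¹ + (B + u)⁻¹ = 2 * B / (B ^ 2 - u ^ 2) := by
  obtain ⟨hlo, hhi⟩ := abs_lt.1 hu
  have hsq : B ^ 2 - u ^ 2 ≠ 0 := by nlinarith
  field_simp [show B - u ≠ 0 by linarith, show B + u ≠ 0 by linarith]
  ring

lemma inv_sub_add_inv_add_le {B u v : ℝ} (huv : |u| ≤ |v|) (hv : |v| < B) :
    (B - u)⁻¹ + (B + u)⁻¹ ≤ (B - v)⁻¹ + (B + v)⁻¹ := by
  have hB : 0 < B := (abs_nonneg v).trans_lt hv
  rw [inv_sub_add_inv_add (huv.trans_lt hv), inv_sub_add_inv_add hv]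
  have hvB : v ^ 2 < B ^ 2 := sq_lt_sq' (by linarith [abs_lt.1 hv]) (abs_lt.1 hv).2
  exact div_le_div_of_nonneg_left (by positivity) (sub_pos.2 hvB)
    (sub_le_sub_left (sq_le_sq.2 huv) _)

lemma inv_sub_add_inv_add_lt {B u v : ℝ} (huv : |u| < |v|) (hv : |v| < B) :
    (B - u)⁻¹ + (B + u)⁻¹ < (B - v)⁻¹ + (B + v)⁻¹ := by
  have hB : 0 < B := (abs_nonneg v).trans_lt hv
  rw [inv_sub_add_inv_add (huv.trans hv), inv_sub_add_inv_add hv]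
  have hvB : v ^ 2 < B ^ 2 := sq_lt_sq' (by linarith [abs_lt.1 hv]) (abs_lt.1 hv).2
  exact div_lt_div_of_pos_left (by positivity) (sub_pos.2 hvB)
    (sub_lt_sub_left (sq_lt_sq.2 huv) _)

lemma integral_lt_integral_of_continuous {X : Type*} [TopologicalSpace X] [MeasurableSpace X]
    {μ : Measure X} [μ.IsOpenPosMeasure] {f g : X → ℝ} (hf : Continuous f) (hg : Continuous g)
    (hfi : Integrable f μ) (hgi : Integrable g μ) (hle : f ≤ g) {x : X} (hlt : f x < g x) :
    ∫ y, f y ∂μ < ∫ y, g y ∂μ := by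
  have := integral_pos_of_integrable_nonneg_nonzero (hg.sub hf) (hgi.sub hfi)
    (fun y => sub_nonneg.2 (hle y)) (sub_ne_zero.2 hlt.ne')
  simp only [Pi.sub_apply] at this
  rwa [integral_sub hgi hfi, sub_pos] at this

lemma integral_add_comp_add_right {G : Type*} [MeasurableSpace G] [AddGroup G] [MeasurableAdd G]
    {μ : Measure G} [μ.IsAddRightInvariant] {f : G → ℝ} (hf : Integrable f μ) (v : G) :
    ∫ x, (f x + f (x + v)) ∂μ = 2 * ∫ x, f x ∂μ := by
  rw [integral_add hf (hf.comp_add_right v), integral_add_right_eq_self, two_mul]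

instance η.isAddLeftInvariant (d : ℕ) : (η d).IsAddLeftInvariant := by unfold η; infer_instance

instance η.isOpenPosMeasure (d : ℕ) : (η d).IsOpenPosMeasure := by unfold η; infer_instance

lemma Continuous.integrable_η {d : ℕ} {f : Torus d → ℝ} (hf : Continuous f) : Integrable f (η d) :=
  hf.integrable_of_hasCompactSupport (HasCompactSupport.of_compactSpace _)

lemma torusCos_coe (x : ℝ) : torusCos x = Real.cos x :=
  Function.Periodic.lift_coe _ _

@[fun_prop]
lemma continuous_torusCos : Continuous torusCos :=
  Real.continuous_cos.quotient_liftOn' _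

lemma torusCos_zero : torusCos 0 = 1 := by
  simpa using torusCos_coe 0

lemma abs_torusCos_le_one (p : AddCircle (2 * π)) : |torusCos p| ≤ 1 := by
  induction p using QuotientAddGroup.induction_on with
  | H x => exact (torusCos_coe x) ▸ abs_cos_le_one x

lemma torusCos_add_piPt (p : AddCircle (2 * π)) : torusCos (p + piPt) = -torusCos p := by
  induction p using QuotientAddGroup.induction_on with
  | H x => rw [piPt, ← AddCircle.coe_add, torusCos_coe, torusCos_coe, cos_add_pi]

lemma torusCos_sub_add_torusCos_add (a x : AddCircle (2 * π)) :
    torusCos (a - x) + torusCos (a + x) = 2 * torusCos a * torusCos x := by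
  induction a using QuotientAddGroup.induction_on with | H a =>
  induction x using QuotientAddGroup.induction_on with | H x =>
  rw [← AddCircle.coe_sub, ← AddCircle.coe_add, torusCos_coe, torusCos_coe, torusCos_coe,
    torusCos_coe, cos_sub, cos_add]
  ring

lemma eq_zero_of_torusCos_eq_one {p : AddCircle (2 * π)} (h : torusCos p = 1) : p = 0 := by
  induction p using QuotientAddGroup.induction_on with | H x =>
  obtain ⟨n, rfl⟩ := (cos_eq_one_iff x).1 ((torusCos_coe x).symm.trans h)
  exact (AddCircle.coe_eq_zero_iff _).2 ⟨n, zsmul_eq_mul _ _⟩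

lemma abs_torusCos_lt_one {a : AddCircle (2 * π)} (ha : a + a ≠ 0) : |torusCos a| < 1 := by
  refine (abs_torusCos_le_one a).lt_of_ne fun h => ha (eq_zero_of_torusCos_eq_one ?_)
  have hdouble := torusCos_sub_add_torusCos_add a a
  have hsq : torusCos a * torusCos a = 1 := by rw [← abs_mul_abs_self, h, one_mul]
  rw [sub_self, torusCos_zero] at hdouble
  linarith

section CosSumResolvent

variable {d : ℕ}

def cosSum (c : Fin d → ℝ) (x : Torus d) : ℝ := ∑ i, c i * torusCos (x i)

def cosSumResolvent (w : ℝ) (c : Fin d → ℝ) (x : Torus d) : ℝ := (w - cosSum c x)⁻¹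

lemma cosSum_lt {w : ℝ} {c : Fin d → ℝ} (hw : ∑ i, |c i| < w) (x : Torus d) :
    cosSum c x < w := by
  refine lt_of_le_of_lt (Finset.sum_le_sum fun i _ => ?_) hw
  calc c i * torusCos (x i) ≤ |c i * torusCos (x i)| := le_abs_self _
    _ ≤ |c i| := by
      rw [abs_mul]; exact mul_le_of_le_one_right (abs_nonneg _) (abs_torusCos_le_one _)

lemma cosSum_add_single_piPt (c : Fin d → ℝ) (x : Torus d) (j : Fin d) :
    cosSum c (x + Pi.single j piPt) = cosSum c x - 2 * (c j * torusCos (x j)) := by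
  rw [eq_sub_iff_add_eq, ← eq_sub_iff_add_eq', cosSum, cosSum,
    Finset.sum_sub_sum_eq_of_eq_of_ne j fun i hi => by simp [hi]]
  simp only [Pi.add_apply, Pi.single_eq_same, torusCos_add_piPt]
  ring

lemma cosSum_update_sub (c : Fin d → ℝ) (x : Torus d) (j : Fin d) (t : ℝ) :
    cosSum (Function.update c j t) x - t * torusCos (x j)
      = cosSum c x - c j * torusCos (x j) := by
  rw [sub_eq_sub_iff_sub_eq_sub, cosSum, cosSum,
    Finset.sum_sub_sum_eq_of_eq_of_ne j fun i hi => by simp [hi]]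
  simp

lemma continuous_cosSumResolvent {w : ℝ} {c : Fin d → ℝ} (hw : ∑ i, |c i| < w) :
    Continuous (cosSumResolvent w c) := by
  refine Continuous.inv₀ ?_ fun x => (sub_pos.2 (cosSum_lt hw x)).ne'
  unfold cosSum
  fun_prop

lemma cosSumResolvent_add_shift (w : ℝ) (c : Fin d → ℝ) (x : Torus d) (j : Fin d) :
    cosSumResolvent w c x + cosSumResolvent w c (x + Pi.single j piPt)
      = (w - (cosSum c x - c j * torusCos (x j)) - c j * torusCos (x j))⁻¹
        + (w - (cosSum c x - c j * torusCos (x j)) + c j * torusCos (x j))⁻¹ := by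
  rw [cosSumResolvent, cosSumResolvent, cosSum_add_single_piPt]
  ring_nf

lemma cosSumResolvent_add_shift_le_update {w : ℝ} {c : Fin d → ℝ} {j : Fin d} {t : ℝ}
    (hw : ∑ i, |Function.update c j t i| < w) {x : Torus d}
    (hct : |c j * torusCos (x j)| ≤ |t * torusCos (x j)|) :
    cosSumResolvent w c x + cosSumResolvent w c (x + Pi.single j piPt)
      ≤ cosSumResolvent w (Function.update c j t) x
        + cosSumResolvent w (Function.update c j t) (x + Pi.single j piPt) := by
  have h₁ := cosSum_lt hw x
  have h₂ := cosSum_lt hw (x + Pi.single j piPt)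
  rw [cosSum_add_single_piPt, Function.update_self] at h₂
  rw [cosSumResolvent_add_shift, cosSumResolvent_add_shift, Function.update_self,
    cosSum_update_sub]
  refine inv_sub_add_inv_add_le hct (abs_lt.2 ⟨?_, ?_⟩) <;> linarith [cosSum_update_sub c x j t]

lemma cosSumResolvent_add_shift_lt_update {w : ℝ} {c : Fin d → ℝ} {j : Fin d} {t : ℝ}
    (hw : ∑ i, |Function.update c j t i| < w) {x : Torus d}
    (hct : |c j * torusCos (x j)| < |t * torusCos (x j)|) :
    cosSumResolvent w c x + cosSumResolvent w c (x + Pi.single j piPt)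
      < cosSumResolvent w (Function.update c j t) x
        + cosSumResolvent w (Function.update c j t) (x + Pi.single j piPt) := by
  have h₁ := cosSum_lt hw x
  have h₂ := cosSum_lt hw (x + Pi.single j piPt)
  rw [cosSum_add_single_piPt, Function.update_self] at h₂
  rw [cosSumResolvent_add_shift, cosSumResolvent_add_shift, Function.update_self,
    cosSum_update_sub]
  refine inv_sub_add_inv_add_lt hct (abs_lt.2 ⟨?_, ?_⟩) <;> linarith [cosSum_update_sub c x j t]

lemma sum_abs_lt_of_update {w : ℝ} {c : Fin d → ℝ} {j : Fin d} {t : ℝ} (hct : |c j| ≤ |t|)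
    (hw : ∑ i, |Function.update c j t i| < w) : ∑ i, |c i| < w := by
  refine lt_of_le_of_lt (Finset.sum_le_sum fun i _ => ?_) hw
  rcases eq_or_ne i j with rfl | hi
  · rwa [Function.update_self]
  · rw [Function.update_of_ne hi]

lemma integral_cosSumResolvent_le_update {w : ℝ} {c : Fin d → ℝ} {j : Fin d} {t : ℝ}
    (hct : |c j| ≤ |t|) (hw : ∑ i, |Function.update c j t i| < w) :
    ∫ x, cosSumResolvent w c x ∂(η d)
      ≤ ∫ x, cosSumResolvent w (Function.update c j t) x ∂(η d) := by
  have hi := (continuous_cosSumResolvent (sum_abs_lt_of_update hct hw)).integrable_η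
  have hi' := (continuous_cosSumResolvent hw).integrable_η
  rw [← mul_le_mul_iff_of_pos_left two_pos, ← integral_add_comp_add_right hi (Pi.single j piPt),
    ← integral_add_comp_add_right hi' (Pi.single j piPt)]
  exact integral_mono (hi.add (hi.comp_add_right _)) (hi'.add (hi'.comp_add_right _)) fun x =>
    cosSumResolvent_add_shift_le_update hw (by rw [abs_mul, abs_mul]; gcongr)

lemma integral_cosSumResolvent_lt_update {w : ℝ} {c : Fin d → ℝ} {j : Fin d} {t : ℝ}
    (hct : |c j| < |t|) (hw : ∑ i, |Function.update c j t i| < w) :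
    ∫ x, cosSumResolvent w c x ∂(η d)
      < ∫ x, cosSumResolvent w (Function.update c j t) x ∂(η d) := by
  have hc := continuous_cosSumResolvent (sum_abs_lt_of_update hct.le hw)
  have hc' := continuous_cosSumResolvent hw
  have hi := hc.integrable_η
  have hi' := hc'.integrable_η
  rw [← mul_lt_mul_iff_of_pos_left two_pos, ← integral_add_comp_add_right hi (Pi.single j piPt),
    ← integral_add_comp_add_right hi' (Pi.single j piPt)]
  refine integral_lt_integral_of_continuous (hc.add (hc.comp (continuous_add_const _)))
    (hc'.add (hc'.comp (continuous_add_const _))) (hi.add (hi.comp_add_right _))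
    (hi'.add (hi'.comp_add_right _))
    (fun x => cosSumResolvent_add_shift_le_update hw (by rw [abs_mul, abs_mul]; gcongr)) (x := 0)
    (cosSumResolvent_add_shift_lt_update hw ?_)
  simpa [torusCos_zero] using hct

lemma integral_cosSumResolvent_le {w : ℝ} {c c' : Fin d → ℝ} (hc : ∀ i, |c i| ≤ c' i)
    (hw : ∑ i, c' i < w) :
    ∫ x, cosSumResolvent w c x ∂(η d) ≤ ∫ x, cosSumResolvent w c' x ∂(η d) := by
  classical
  have hc' : ∀ i, |c' i| = c' i := fun i => abs_of_nonneg ((abs_nonneg _).trans (hc i))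
  suffices ∀ s : Finset (Fin d),
      ∫ x, cosSumResolvent w c x ∂(η d) ≤ ∫ x, cosSumResolvent w (s.piecewise c' c) x ∂(η d) by
    simpa using this Finset.univ
  intro s
  induction s using Finset.induction_on with
  | empty => simp
  | insert j s hj ih =>
    rw [Finset.piecewise_insert]
    refine ih.trans (integral_cosSumResolvent_le_update ?_
      ((Finset.sum_le_sum fun i _ => ?_).trans_lt hw))
    · rw [Finset.piecewise_eq_of_notMem _ _ _ hj, hc']
      exact hc j
    · rcases eq_or_ne i j with rfl | hi
      · rw [Function.update_self, hc']
      · rw [Function.update_of_ne hi]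
        exact s.piecewise_cases c' c (fun y => |y| ≤ c' i) (hc' i).le (hc i)

lemma integral_cosSumResolvent_lt {w : ℝ} {c c' : Fin d → ℝ} (hc : ∀ i, |c i| ≤ c' i)
    {j : Fin d} (hj : |c j| < c' j) (hw : ∑ i, c' i < w) :
    ∫ x, cosSumResolvent w c x ∂(η d) < ∫ x, cosSumResolvent w c' x ∂(η d) := by
  have hc' : ∀ i, |c' i| = c' i := fun i => abs_of_nonneg ((abs_nonneg _).trans (hc i))
  have hupdate : ∀ i, |Function.update c j (c' j) i| ≤ c' i := fun i => by
    rcases eq_or_ne i j with rfl | hi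
    · rw [Function.update_self, hc']
    · rw [Function.update_of_ne hi]; exact hc i
  refine (integral_cosSumResolvent_lt_update (by rwa [hc'])
    ((Finset.sum_le_sum fun i _ => hupdate i).trans_lt hw)).trans_le
    (integral_cosSumResolvent_le hupdate hw)

end CosSumResolvent

section Dispersion

variable {d : ℕ}

lemma eps_nonneg (p : Torus d) : 0 ≤ eps d p :=
  mul_nonneg zero_le_two <| Finset.sum_nonneg fun i _ =>
    sub_nonneg.2 (abs_le.1 (abs_torusCos_le_one (p i))).2

lemma calE_nonneg (k p : Torus d) : 0 ≤ calE d k p :=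
  add_nonneg (eps_nonneg _) (eps_nonneg _)

lemma continuous_calE (k : Torus d) : Continuous (calE d k) := by
  unfold calE eps
  fun_prop

lemma Emin_zero_nonpos : Emin d 0 ≤ 0 := by
  have hzero : calE d 0 0 = 0 := by simp [calE, eps, torusCos_zero]
  exact hzero ▸ csInf_le ⟨0, Set.forall_mem_range.2 (calE_nonneg 0)⟩ (Set.mem_range_self 0)

lemma calE_add_self_add (a x : Torus d) :
    calE d (a + a) (a + x) = ∑ i, 4 * (1 - torusCos (a i) * torusCos (x i)) := by
  rw [calE, eps, eps, add_sub_add_left_eq_sub, ← mul_add, ← Finset.sum_add_distrib,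
    Finset.mul_sum]
  refine Finset.sum_congr rfl fun i _ => ?_
  have := torusCos_sub_add_torusCos_add (a i) (x i)
  simp only [Pi.sub_apply, Pi.add_apply]
  linarith

lemma integral_inv_calE_sub_mono (k : Torus d) {z₁ z₂ : ℝ} (h₁₂ : z₁ ≤ z₂) (h₂ : z₂ < 0) :
    ∫ q, (calE d k q - z₁)⁻¹ ∂(η d) ≤ ∫ q, (calE d k q - z₂)⁻¹ ∂(η d) := by
  have hpos : ∀ {z : ℝ}, z < 0 → ∀ q, 0 < calE d k q - z := fun hz q => by
    linarith [calE_nonneg k q]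
  have hint : ∀ {z : ℝ}, z < 0 → Integrable (fun q => (calE d k q - z)⁻¹) (η d) := fun hz =>
    ((continuous_calE k).sub continuous_const |>.inv₀ fun q => (hpos hz q).ne').integrable_η
  exact integral_mono (hint (h₁₂.trans_lt h₂)) (hint h₂) fun q =>
    inv_anti₀ (hpos h₂ q) (by linarith)

lemma integral_inv_calE_add_self_sub (a : Torus d) (z : ℝ) :
    ∫ q, (calE d (a + a) q - z)⁻¹ ∂(η d)
      = ∫ x, cosSumResolvent (4 * d - z) (fun i => 4 * torusCos (a i)) x ∂(η d) := by
  rw [← integral_add_left_eq_self _ a]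
  congr 1 with x
  rw [calE_add_self_add, cosSumResolvent, cosSum, ← Finset.mul_sum, Finset.sum_sub_distrib]
  simp only [Finset.sum_const, Finset.card_univ, Fintype.card_fin, nsmul_eq_mul, mul_assoc,
    ← Finset.mul_sum]
  ring

theorem integral_inv_calE_sub_lt {k : Torus d} (hk : k ≠ 0) {z : ℝ} (hz : z < 0) :
    ∫ q, (calE d k q - z)⁻¹ ∂(η d) < ∫ q, (calE d 0 q - z)⁻¹ ∂(η d) := by
  obtain ⟨a, rfl⟩ : ∃ a, a + a = k :=
    ⟨DivisibleBy.div k (2 : ℤ), by rw [← two_zsmul]; exact DivisibleBy.div_cancel k two_ne_zero⟩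
  obtain ⟨j, hj⟩ : ∃ j, a j + a j ≠ 0 := by
    by_contra! h
    exact hk (funext h)
  have h₀ := integral_inv_calE_add_self_sub (0 : Torus d) z
  simp only [add_zero, Pi.zero_apply, torusCos_zero, mul_one] at h₀
  have hw : ∑ _i : Fin d, (4 : ℝ) < 4 * d - z := by
    simp only [Finset.sum_const, Finset.card_univ, Fintype.card_fin, nsmul_eq_mul]
    linarith
  rw [integral_inv_calE_add_self_sub, h₀]
  refine integral_cosSumResolvent_lt (fun i => ?_) (j := j) ?_ hw
  · rw [abs_mul, abs_of_pos four_pos]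
    linarith [abs_torusCos_le_one (a i)]
  · rw [abs_mul, abs_of_pos four_pos]
    linarith [abs_torusCos_lt_one hj]

end Dispersion

theorem bound_state_energy_strict_min_at_zero_general (d : ℕ) (μ : ℝ)
    (hμ : μ < 0) (k : Torus d) (hk : k ≠ 0) (z₀ zk : ℝ)
    (hz₀ : z₀ < Emin d 0) (hΔ₀ : Delta2 d μ 0 z₀ = 0)
    (hΔk : Delta2 d μ k zk = 0) :
    z₀ < zk := by
  by_contra! hle
  have hz₀_neg : z₀ < 0 := hz₀.trans_le Emin_zero_nonpos
  have hI : ∫ q, (calE d k q - zk)⁻¹ ∂(η d) = ∫ q, (calE d 0 q - z₀)⁻¹ ∂(η d) := by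
    unfold Delta2 at hΔ₀ hΔk
    exact mul_left_cancel₀ hμ.ne (by linarith)
  have hlt := integral_inv_calE_sub_lt hk (hle.trans_lt hz₀_neg)
  have hmono := integral_inv_calE_sub_mono (0 : Torus d) hle hz₀_neg
  linarith

/-- for `d ∈ {1,2}`, `μ < 0` and `k ≠ 0`, if `z₀ < E_min(0)` is a zero
of `Δ_μ(0;·)` and `z_k < E_min(k)` is a zero of `Δ_μ(k;·)`, then `z₀ < z_k`. -/
theorem bound_state_energy_strict_min_at_zero (d : ℕ) (hd : d = 1 ∨ d = 2) (μ : ℝ)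
    (hμ : μ < 0) (k : Torus d) (hk : k ≠ 0) (z₀ zk : ℝ)
    (hz₀ : z₀ < Emin d 0) (hΔ₀ : Delta2 d μ 0 z₀ = 0)
    (hzk : zk < Emin d k) (hΔk : Delta2 d μ k zk = 0) :
    z₀ < zk :=
  bound_state_energy_strict_min_at_zero_general d μ hμ k hk z₀ zk hz₀ hΔ₀ hΔk
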